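/- Let 0 ≤ l < k ≤ n and let λ = (λ_1, …, λ_n) ∈ Γ_k with λ_1 ≥ λ_2 ≥ ⋯ ≥ λ_n. Then λ_1, …, λ_l are all positive and σ_{k−1}(λ) ≥ λ_1⋯λ_l · σ_{k−l−1}(λ|1, …, l), where for l = 0 the empty product equals 1. (A step used in display (2.13) in the proof of Lemma 2.6.) -/

import Mathlib

open Finset

noncomputable def esymm {n : ℕ} (lam : Fin n → ℝ) (m : ℤ) : ℝ :=
  if m < 0 then 0
  else ∑ s ∈ Finset.powersetCard m.toNat Finset.univ, ∏ i ∈ s, lam i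

noncomputable def esymmDel {n : ℕ} (lam : Fin n → ℝ) (i : Fin n) (m : ℤ) : ℝ :=
  if m < 0 then 0
  else ∑ s ∈ Finset.powersetCard m.toNat (Finset.univ.erase i), ∏ j ∈ s, lam j

noncomputable def esymmDelSet {n : ℕ} (lam : Fin n → ℝ) (S : Finset (Fin n)) (m : ℤ) : ℝ :=
  if m < 0 then 0
  else ∑ s ∈ Finset.powersetCard m.toNat (Finset.univ \ S), ∏ j ∈ s, lam j

def GardingCone (n k : ℕ) : Set (Fin n → ℝ) :=
  {lam | ∀ m : ℕ, 1 ≤ m → m ≤ k → 0 < esymm lam (m : ℤ)}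

noncomputable def sigmaMat {n : ℕ} (A : Matrix (Fin n) (Fin n) ℝ) (m : ℤ) : ℝ :=
  if m < 0 then 0
  else ∑ s ∈ Finset.powersetCard m.toNat (Finset.univ : Finset (Fin n)),
    (A.submatrix (fun i : {x : Fin n // x ∈ s} => (i : Fin n))
                 (fun j : {x : Fin n // x ∈ s} => (j : Fin n))).det

/-!
Put `p_s = ∏_{a ∈ s} (X + a)` for a multiset `s` of reals; its coefficient of `X^(|s| - j)` is
`σ_j(s)`. By Rolle all derivatives of `p_s` are real-rooted, and `s ∈ Γ_k` iff `p_s^{(|s|-k)}` is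
positive on `[0, ∞)`: nonnegative coefficients give positivity, and conversely a real-rooted
polynomial without roots in `[0, ∞)` has negative roots only, hence positive coefficients.

Deleting an entry maps `Γ_{k+1}` into `Γ_k`: by Leibniz
`p_{a::s}^{(m)} = (X + a) p_s^{(m)} + m p_s^{(m-1)}`, and at the largest root `β` of `p_s^{(m)}`
the real-rooted `p_s^{(m-1)}` is `≤ 0`, so `β ≥ 0` would contradict positivity of
`p_{a::s}^{(m)}` on `[0, ∞)`.

Hence a point of `Γ_k` has at least `k` positive entries (`σ_1 > 0` provides one; delete it and
recurse), so for sorted `λ` the entries `λ_1, …, λ_k` are positive. Finally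
`σ_{j+1}(a::s) = σ_{j+1}(s) + a σ_j(s) ≥ a σ_j(s)` as `s ∈ Γ_{j+1}`; applying this to
`λ_1, …, λ_l` in turn gives the inequality.
-/

open Polynomial

namespace Multiset

variable {R : Type*}

section CommSemiring

variable [CommSemiring R]

theorem esymm_zero (s : Multiset R) : s.esymm 0 = 1 := by
  simp [esymm, powersetCard_zero_left]

theorem esymm_one (s : Multiset R) : s.esymm 1 = s.sum := by
  simp [esymm, powersetCard_one, map_map]

theorem esymm_cons_succ (a : R) (s : Multiset R) (j : ℕ) :
    (a ::ₘ s).esymm (j + 1) = s.esymm (j + 1) + a * s.esymm j := by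
  simp [esymm, powersetCard_cons, map_map, sum_map_mul_left]

theorem esymm_eq_zero_of_card_lt {s : Multiset R} {j : ℕ} (h : card s < j) : s.esymm j = 0 := by
  simp [esymm, powersetCard_eq_empty _ h]

end CommSemiring

theorem esymm_pos [CommSemiring R] [PartialOrder R] [IsStrictOrderedRing R] {s : Multiset R}
    (hs : ∀ a ∈ s, 0 < a) {j : ℕ} (hj : j ≤ card s) : 0 < s.esymm j := by
  have hne : powersetCard j s ≠ 0 := by
    rw [← card_pos, card_powersetCard]
    exact Nat.choose_pos hj
  calc (0 : R) = ((powersetCard j s).map fun _ => (0 : R)).sum := by simp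
    _ < ((powersetCard j s).map prod).sum :=
      sum_lt_sum_of_nonempty hne fun t ht =>
        prod_pos fun a ha => hs a (mem_of_le (mem_powersetCard.1 ht).1 ha)

end Multiset

namespace Polynomial

theorem Splits.derivative {p : ℝ[X]} (hp : p.Splits) : p.derivative.Splits := by
  rw [splits_iff_card_roots] at hp ⊢
  have := card_roots_le_derivative p
  have := natDegree_derivative_le p
  have := card_roots' p.derivative
  omega

theorem Splits.iterate_derivative {p : ℝ[X]} (hp : p.Splits) (m : ℕ) :
    (Polynomial.derivative^[m] p).Splits := by
  induction m with
  | zero => exact hp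
  | succ m ih => rw [Function.iterate_succ_apply']; exact ih.derivative

theorem natDegree_iterate_derivative_eq {R : Type*} [Semiring R] [IsAddTorsionFree R]
    (p : R[X]) (m : ℕ) : (derivative^[m] p).natDegree = p.natDegree - m := by
  induction m with
  | zero => rfl
  | succ m ih => rw [Function.iterate_succ_apply', natDegree_derivative, ih, Nat.sub_sub]

theorem leadingCoeff_iterate_derivative_pos {p : ℝ[X]} (hp : 0 < p.leadingCoeff) {m : ℕ}
    (hm : m ≤ p.natDegree) : 0 < (derivative^[m] p).leadingCoeff := by
  induction m with
  | zero => exact hp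
  | succ m ih =>
    rw [Function.iterate_succ_apply', leadingCoeff_derivative, natDegree_iterate_derivative_eq]
    exact mul_pos (ih (by omega)) (by exact_mod_cast (by omega : 0 < p.natDegree - m))

theorem iterate_derivative_X_add_C_mul {R : Type*} [CommSemiring R] (c : R) (q : R[X]) (m : ℕ) :
    derivative^[m] ((X + C c) * q) =
      (X + C c) * derivative^[m] q + m • derivative^[m - 1] q := by
  rw [add_mul, iterate_map_add, mul_comm X q, iterate_derivative_mul_X,
    iterate_derivative_C_mul]
  ring

theorem eval_pos_of_coeff_nonneg {R : Type*} [Semiring R] [PartialOrder R] [IsOrderedRing R]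
    {p : R[X]} (hp : ∀ i, 0 ≤ p.coeff i) (h0 : 0 < p.coeff 0) {t : R} (ht : 0 ≤ t) :
    0 < p.eval t := by
  rw [eval_eq_sum_range]
  calc 0 < p.coeff 0 * t ^ 0 := by simpa using h0
    _ ≤ ∑ i ∈ range (p.natDegree + 1), p.coeff i * t ^ i :=
      single_le_sum (fun i _ => mul_nonneg (hp i) (pow_nonneg ht i)) (by simp)

theorem eval_pos_of_roots_lt {p : ℝ[X]} (hp : p.Splits) (hlc : 0 < p.leadingCoeff) {t : ℝ}
    (ht : ∀ r ∈ p.roots, r < t) : 0 < p.eval t := by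
  rw [hp.eval_eq_prod_roots]
  exact mul_pos hlc <|
    Multiset.prod_pos (Multiset.forall_mem_map_iff.2 fun r hr => sub_pos.2 (ht r hr))

theorem eval_derivative_prod_X_sub_C_pos {s : Multiset ℝ} (hs : s ≠ 0) {t : ℝ}
    (ht : ∀ r ∈ s, r < t) : 0 < (derivative (s.map (X - C ·)).prod).eval t := by
  induction s using Multiset.induction_on with
  | empty => contradiction
  | cons a s ih =>
    have hs' : ∀ r ∈ s, r < t := fun r hr => ht r (Multiset.mem_cons_of_mem hr)
    have hprod : 0 < ((s.map (X - C ·)).prod).eval t := by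
      rw [eval_multiset_prod]
      exact Multiset.prod_pos (by simpa using hs')
    have hderiv : 0 ≤ (derivative (s.map (X - C ·)).prod).eval t := by
      rcases eq_or_ne s 0 with rfl | hs0
      · simp
      · exact (ih hs0 hs').le
    have ha : 0 < t - a := sub_pos.2 (ht a (Multiset.mem_cons_self a s))
    simp only [Multiset.map_cons, Multiset.prod_cons, derivative_mul, derivative_sub,
      derivative_X, derivative_C, sub_zero, one_mul, eval_add, eval_mul, eval_sub, eval_X, eval_C]
    exact add_pos_of_pos_of_nonneg hprod (mul_nonneg ha.le hderiv)

theorem eval_derivative_pos_of_roots_lt {p : ℝ[X]} (hp : p.Splits) (hlc : 0 < p.leadingCoeff)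
    (hdeg : p.natDegree ≠ 0) {t : ℝ} (ht : ∀ r ∈ p.roots, r < t) :
    0 < (derivative p).eval t := by
  rw [hp.eq_prod_roots, derivative_C_mul, eval_mul, eval_C]
  exact mul_pos hlc (eval_derivative_prod_X_sub_C_pos (hp.roots_ne_zero hdeg) ht)

theorem coeff_pos_of_eval_pos {p : ℝ[X]} (hp : p.Splits) (hlc : 0 < p.leadingCoeff)
    (h : ∀ t, 0 ≤ t → 0 < p.eval t) {i : ℕ} (hi : i ≤ p.natDegree) : 0 < p.coeff i := by
  have hroots : ∀ r ∈ p.roots, 0 < -r := fun r hr => by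
    by_contra! hr0
    exact (h r (by linarith)).ne' (isRoot_of_mem_roots hr)
  rw [coeff_eq_esymm_roots_of_splits hp hi, mul_assoc, ← Multiset.esymm_neg]
  refine mul_pos hlc (Multiset.esymm_pos (Multiset.forall_mem_map_iff.2 hroots) ?_)
  rw [Multiset.card_map, ← hp.natDegree_eq_card_roots]
  omega

theorem eval_nonpos_of_forall_roots_derivative_le {g : ℝ[X]} (hg : g.Splits)
    (hlc : 0 < g.leadingCoeff) {β : ℝ} (hβ : β ∈ (derivative g).roots)
    (hmax : ∀ r ∈ (derivative g).roots, r ≤ β) : g.eval β ≤ 0 := by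
  have hdeg : g.natDegree ≠ 0 := derivative_ne_zero.1 (ne_zero_of_mem_roots hβ)
  have hlc' : 0 < (derivative g).leadingCoeff := by
    rw [leadingCoeff_derivative]
    exact mul_pos hlc (by exact_mod_cast Nat.pos_of_ne_zero hdeg)
  have hmono : MonotoneOn g.eval (Set.Ici β) := by
    refine monotoneOn_of_deriv_nonneg (convex_Ici β) g.continuousOn g.differentiableOn
      fun x hx => ?_
    rw [interior_Ici] at hx
    rw [Polynomial.deriv]
    exact (eval_pos_of_roots_lt hg.derivative hlc' fun r hr => (hmax r hr).trans_lt hx).le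
  -- If `g β > 0`, monotonicity puts every root of `g` left of `β`, which forces `g' β > 0`.
  by_contra! hpos
  have hroots : ∀ r ∈ g.roots, r < β := by
    intro r hr
    by_contra! hβr
    have : g.eval β ≤ g.eval r := hmono Set.self_mem_Ici hβr hβr
    rw [(isRoot_of_mem_roots hr).eq_zero] at this
    linarith
  exact (eval_derivative_pos_of_roots_lt hg hlc hdeg hroots).ne' (isRoot_of_mem_roots hβ)

theorem eval_iterate_derivative_pos_of_X_add_C_mul {q : ℝ[X]} (hq : q.Splits)
    (hlc : 0 < q.leadingCoeff) {m : ℕ} (hm : m ≤ q.natDegree) (c : ℝ)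
    (h : ∀ t, 0 ≤ t → 0 < (derivative^[m] ((X + C c) * q)).eval t) :
    ∀ t, 0 ≤ t → 0 < (derivative^[m] q).eval t := by
  intro t ht
  suffices hneg : ∀ r ∈ (derivative^[m] q).roots, r < 0 from
    eval_pos_of_roots_lt (hq.iterate_derivative m) (leadingCoeff_iterate_derivative_pos hlc hm)
      fun r hr => (hneg r hr).trans_le ht
  by_contra! ⟨r₀, hr₀, hr₀_nonneg⟩
  obtain ⟨β, hβ, hmax⟩ :=
    Multiset.exists_max_image id (ne_of_mem_of_not_mem' hr₀ (Multiset.notMem_zero r₀))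
  have hβ_nonneg : 0 ≤ β := hr₀_nonneg.trans (hmax r₀ hr₀)
  have hlower : m * (derivative^[m - 1] q).eval β ≤ 0 := by
    cases m with
    | zero => simp
    | succ m =>
      rw [Function.iterate_succ_apply'] at hβ hmax
      exact mul_nonpos_of_nonneg_of_nonpos (by positivity)
        (eval_nonpos_of_forall_roots_derivative_le (hq.iterate_derivative m)
          (leadingCoeff_iterate_derivative_pos hlc (by omega)) hβ hmax)
  have := h β hβ_nonneg
  rw [iterate_derivative_X_add_C_mul, eval_add, eval_mul, (isRoot_of_mem_roots hβ).eq_zero,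
    mul_zero, zero_add, eval_smul, nsmul_eq_mul] at this
  linarith

end Polynomial

namespace Multiset

theorem monic_prod_X_add_C (s : Multiset ℝ) : (s.map (X + C ·)).prod.Monic :=
  monic_multiset_prod_of_monic _ _ fun a _ => monic_X_add_C a

theorem natDegree_prod_X_add_C (s : Multiset ℝ) : (s.map (X + C ·)).prod.natDegree = card s := by
  rw [natDegree_multiset_prod_of_monic _ fun p hp => by
    obtain ⟨a, _, rfl⟩ := mem_map.1 hp; exact monic_X_add_C a]
  simp

theorem splits_prod_X_add_C (s : Multiset ℝ) : (s.map (X + C ·)).prod.Splits :=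
  Splits.multisetProd fun p hp => by obtain ⟨a, _, rfl⟩ := mem_map.1 hp; exact Splits.X_add_C a

def InGardingCone (s : Multiset ℝ) (k : ℕ) : Prop := ∀ j ≤ k, 0 < s.esymm j

namespace InGardingCone

variable {s : Multiset ℝ} {k : ℕ}

theorem le_card (h : s.InGardingCone k) : k ≤ card s := by
  by_contra! hk
  exact (h k le_rfl).ne' (esymm_eq_zero_of_card_lt hk)

theorem eval_iterate_derivative_pos (h : s.InGardingCone k) {t : ℝ} (ht : 0 ≤ t) :
    0 < (derivative^[card s - k] (s.map (X + C ·)).prod).eval t := by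
  have hk := h.le_card
  refine eval_pos_of_coeff_nonneg (fun i => ?_) ?_ ht
  · rw [coeff_iterate_derivative]
    refine nsmul_nonneg ?_ _
    rcases le_or_gt (i + (card s - k)) (card s) with hi | hi
    · rw [prod_X_add_C_coeff s hi]
      exact (h _ (by omega)).le
    · rw [coeff_eq_zero_of_natDegree_lt (by rwa [natDegree_prod_X_add_C])]
  · rw [coeff_iterate_derivative, zero_add, prod_X_add_C_coeff s (by omega), nsmul_eq_mul]
    exact mul_pos (by exact_mod_cast Nat.descFactorial_pos.2 le_rfl) (h _ (by omega))

theorem of_eval_iterate_derivative_pos (hk : k ≤ card s)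
    (h : ∀ t, 0 ≤ t → 0 < (derivative^[card s - k] (s.map (X + C ·)).prod).eval t) :
    s.InGardingCone k := by
  have hdeg : (derivative^[card s - k] (s.map (X + C ·)).prod).natDegree = k := by
    rw [natDegree_iterate_derivative_eq, natDegree_prod_X_add_C]
    omega
  intro j hj
  have hcoeff := coeff_pos_of_eval_pos ((splits_prod_X_add_C s).iterate_derivative _)
    (leadingCoeff_iterate_derivative_pos ((monic_prod_X_add_C s).leadingCoeff ▸ one_pos)
      (by rw [natDegree_prod_X_add_C]; omega)) h (i := k - j) (by omega)
  rw [coeff_iterate_derivative, prod_X_add_C_coeff s (by omega), nsmul_eq_mul,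
    show card s - (k - j + (card s - k)) = j by omega] at hcoeff
  exact pos_of_mul_pos_right hcoeff (Nat.cast_nonneg _)

theorem of_cons {a : ℝ} (h : (a ::ₘ s).InGardingCone (k + 1)) : s.InGardingCone k := by
  have hk : k ≤ card s := by simpa using h.le_card
  have hP := fun t (ht : 0 ≤ t) => h.eval_iterate_derivative_pos ht
  simp only [map_cons, prod_cons, card_cons, Nat.add_sub_add_right] at hP
  exact of_eval_iterate_derivative_pos hk <|
    eval_iterate_derivative_pos_of_X_add_C_mul (splits_prod_X_add_C s)
      ((monic_prod_X_add_C s).leadingCoeff ▸ one_pos)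
      (by rw [natDegree_prod_X_add_C]; omega) a hP

theorem le_card_filter_pos (h : s.InGardingCone k) : k ≤ card (s.filter (0 < ·)) := by
  induction k generalizing s with
  | zero => exact Nat.zero_le _
  | succ k ih =>
    obtain ⟨a, ha, ha_pos⟩ : ∃ a ∈ s, 0 < a := by
      by_contra! hs
      have hsum := h 1 (by omega)
      rw [esymm_one] at hsum
      exact hsum.not_ge (by simpa using sum_le_card_nsmul s 0 hs)
    rw [← cons_erase ha] at h ⊢
    rw [filter_cons_of_pos _ ha_pos, card_cons]
    exact Nat.succ_le_succ (ih h.of_cons)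

theorem prod_mul_esymm_le {t : Multiset ℝ} {j : ℕ} (h : (t + s).InGardingCone (j + card t + 1))
    (ht : ∀ a ∈ t, 0 ≤ a) : t.prod * s.esymm j ≤ (t + s).esymm (j + card t) := by
  induction t using Multiset.induction_on with
  | empty => simp
  | cons a t ih =>
    rw [cons_add, card_cons, ← add_assoc] at h ⊢
    have h' := h.of_cons
    have ha := ht a (mem_cons_self a t)
    have hIH := ih h' fun b hb => ht b (mem_cons_of_mem hb)
    rw [esymm_cons_succ, prod_cons, mul_assoc]
    nlinarith [mul_le_mul_of_nonneg_left hIH ha, h' _ le_rfl]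

end InGardingCone

end Multiset

theorem esymm_natCast {n : ℕ} (lam : Fin n → ℝ) (m : ℕ) :
    esymm lam m = (univ.val.map lam).esymm m := by
  rw [Finset.esymm_map_val, esymm, if_neg (Int.natCast_nonneg m).not_gt, Int.toNat_natCast]

theorem esymmDelSet_natCast {n : ℕ} (lam : Fin n → ℝ) (S : Finset (Fin n)) (m : ℕ) :
    esymmDelSet lam S m = ((univ \ S).val.map lam).esymm m := by
  rw [Finset.esymm_map_val, esymmDelSet, if_neg (Int.natCast_nonneg m).not_gt, Int.toNat_natCast]

theorem mem_gardingCone_iff {n k : ℕ} {lam : Fin n → ℝ} :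
    lam ∈ GardingCone n k ↔ (univ.val.map lam).InGardingCone k := by
  simp only [GardingCone, Set.mem_ofPred_eq, Multiset.InGardingCone, esymm_natCast]
  refine ⟨fun h j hj => ?_, fun h m _ hm => h m hm⟩
  rcases Nat.eq_zero_or_pos j with rfl | hj0
  · simp [Multiset.esymm_zero]
  · exact h j hj0 hj

theorem pos_of_antitone_of_inGardingCone {n k : ℕ} {lam : Fin n → ℝ} (hanti : Antitone lam)
    (h : (univ.val.map lam).InGardingCone k) {i : Fin n} (hi : (i : ℕ) < k) : 0 < lam i := by
  by_contra! hle
  have hsub : univ.filter (fun j => 0 < lam j) ⊆ Iio i := fun j hj => by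
    simp only [mem_filter, mem_univ, true_and] at hj
    exact mem_Iio.2 (lt_of_not_ge fun hij => (hanti hij).trans hle |>.not_gt hj)
  have hcard := h.le_card_filter_pos
  rw [Multiset.filter_map, Multiset.card_map] at hcard
  have := card_le_card hsub
  rw [Fin.card_Iio] at this
  exact (hcard.trans this).not_gt hi

/-- A step in display (2.13): if 0 ≤ l < k ≤ n and λ ∈ Γ_k with λ₁ ≥ ⋯ ≥ λₙ, then
λ₁, …, λ_l are positive and σ_{k−1}(λ) ≥ λ₁⋯λ_l · σ_{k−l−1}(λ|1,…,l). -/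
theorem esymm_ge_prod_mul_esymmDelSet (n k l : ℕ) (hlk : l < k) (hkn : k ≤ n)
    (lam : Fin n → ℝ) (hlam : lam ∈ GardingCone n k)
    (hsort : ∀ i j : Fin n, i ≤ j → lam j ≤ lam i) :
    (∀ i : Fin n, (i : ℕ) < l → 0 < lam i) ∧
    esymm lam ((k : ℤ) - 1)
      ≥ (∏ i ∈ Finset.univ.filter (fun i : Fin n => (i : ℕ) < l), lam i) *
        esymmDelSet lam (Finset.univ.filter (fun i : Fin n => (i : ℕ) < l))
          ((k : ℤ) - (l : ℤ) - 1) := by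
  have hcone := mem_gardingCone_iff.1 hlam
  have hpos : ∀ i : Fin n, (i : ℕ) < l → 0 < lam i := fun i hi =>
    pos_of_antitone_of_inGardingCone hsort hcone (hi.trans hlk)
  refine ⟨hpos, ?_⟩
  set S := univ.filter fun i : Fin n => (i : ℕ) < l
  have hsplit : S.val.map lam + (univ \ S).val.map lam = univ.val.map lam := by
    rw [← Multiset.map_add, ← filter_not, filter_val, filter_val, Multiset.filter_add_not]
  have hcard : Multiset.card (S.val.map lam) = l := by
    rw [Multiset.card_map]
    exact Fin.card_filter_val_lt.trans (min_eq_right (hlk.le.trans hkn))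
  have key := Multiset.InGardingCone.prod_mul_esymm_le (t := S.val.map lam)
    (s := (univ \ S).val.map lam) (j := k - 1 - l)
    (by rwa [hsplit, hcard, show k - 1 - l + l + 1 = k by omega])
    (Multiset.forall_mem_map_iff.2 fun i hi => (hpos i (by simpa [S] using hi)).le)
  rw [hsplit, hcard, show k - 1 - l + l = k - 1 by omega] at key
  rw [show (k : ℤ) - 1 = ((k - 1 : ℕ) : ℤ) by omega,
    show (k : ℤ) - l - 1 = ((k - 1 - l : ℕ) : ℤ) by omega, esymm_natCast, esymmDelSet_natCast]
  exact key
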